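/- Let p1, p6 ∈ ℂ[v,y] ⊂ S, q1, q6 ∈ ℂ[v] ⊂ S and k1, k6 ∈ ℂ. Set E1 = (−v²y² + p1·t)∂_y + q1·t·∂_v + k1·t·∂_t and E6 = p6·t·∂_y + (v + q6·t)∂_v + k6·t·∂_t. If [E1,E6] ≡ −2·E1 (mod t²), then k1 = 0. -/

import Mathlib

/-! Comparing `∂_t`-components suffices: `E1` and `E6` both scale `t`, so `[E1,E6] t = 0`
and the congruence reduces to `2 k1 t ∈ (t²)`. -/

open MvPolynomial

noncomputable section

/-- `S = ℂ[v,y,t]` with `v = X 0`, `y = X 1`, `t = X 2`. -/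
abbrev S : Type := MvPolynomial (Fin 3) ℂ

/-- The variable `v`. -/ def V : S := X 0
/-- The variable `y`. -/ def Y : S := X 1
/-- The variable `t`. -/ def T : S := X 2

/-- The derivation `f ∂_y + g ∂_v + h ∂_t` of `S = ℂ[v,y,t]`. -/
def der (f g h : S) : Derivation ℂ S S :=
  MvPolynomial.mkDerivation ℂ ![g, f, h]

/-- The inclusion `ℂ[v,y] ⊂ S`, `v ↦ v`, `y ↦ y` (variables `0 ↦ v`, `1 ↦ y`). -/
def ι2 : MvPolynomial (Fin 2) ℂ →ₐ[ℂ] S := aeval ![V, Y]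

/-- The inclusion `ℂ[v] ⊂ S`. -/
def ι1 : Polynomial ℂ →ₐ[ℂ] S := Polynomial.aeval V

/-- `D ≡ D' (mod t²)`. -/
def ModT2 (D D' : Derivation ℂ S S) : Prop :=
  ∀ i : Fin 3, (D - D') (X i) ∈ Ideal.span {T ^ 2}

theorem Derivation.commutator_apply_eq_zero_of_apply_eq_smul {R A : Type*} [CommRing R]
    [CommRing A] [Algebra R A] {D₁ D₂ : Derivation R A A} {a : A} {r₁ r₂ : R}
    (h₁ : D₁ a = r₁ • a) (h₂ : D₂ a = r₂ • a) : ⁅D₁, D₂⁆ a = 0 := by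
  rw [commutator_apply, h₁, h₂, map_smul, map_smul, h₁, h₂, smul_comm, sub_self]

theorem MvPolynomial.smul_X_mem_span_X_sq_iff {σ R : Type*} [CommSemiring R] (r : R) (i : σ) :
    r • X i ∈ Ideal.span {(X i : MvPolynomial σ R) ^ 2} ↔ r = 0 := by
  rw [Ideal.mem_span_singleton, smul_eq_C_mul, C_mul_X_eq_monomial, X_pow_eq_monomial,
    monomial_dvd_monomial]
  simp

theorem der_apply_T (f g h : S) : der f g h T = h :=
  mkDerivation_X ℂ _ 2

theorem bracket_E1_E6 (p1 p6 : MvPolynomial (Fin 2) ℂ) (q1 q6 : Polynomial ℂ) (k1 k6 : ℂ)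
    (E1 E6 : Derivation ℂ S S)
    (hE1 : E1 = der (-V ^ 2 * Y ^ 2 + ι2 p1 * T) (ι1 q1 * T) (C k1 * T))
    (hE6 : E6 = der (ι2 p6 * T) (V + ι1 q6 * T) (C k6 * T))
    (h : ModT2 ⁅E1, E6⁆ ((-2 : ℂ) • E1)) : k1 = 0 := by
  have hE1T : E1 T = k1 • T := by rw [hE1, der_apply_T, smul_eq_C_mul]
  have hE6T : E6 T = k6 • T := by rw [hE6, der_apply_T, smul_eq_C_mul]
  have hdiffT : (⁅E1, E6⁆ - (-2 : ℂ) • E1) T = (2 * k1) • T := by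
    rw [Derivation.sub_apply, Derivation.commutator_apply_eq_zero_of_apply_eq_smul hE1T hE6T,
      Derivation.smul_apply, hE1T, smul_smul, zero_sub, ← neg_smul, neg_mul, neg_neg]
  have hmem : (2 * k1) • X 2 ∈ Ideal.span {(X 2 : S) ^ 2} := hdiffT ▸ h 2
  simpa using (smul_X_mem_span_X_sq_iff _ _).mp hmem

end
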